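/- Let Q := convexHull{ω₀, ω₁, ω₂, ω₃} ⊆ ℝ³. An invertible linear map T : ℝ³ → ℝ³ satisfies T(Q) = Q if and only if T is one of the eight matrices U_k^s = [[cos(πk/2), −s·sin(πk/2), 0], [sin(πk/2), s·cos(πk/2), 0], [0, 0, 1]] with k ∈ {0,1,2,3} and s ∈ {+1, −1}. In other words, the reversible channels of the squit form the dihedral group of order eight. -/

import Mathlib

open Matrix Real

/-- The four extremal states of the squit. -/
noncomputable def ws : Fin 4 → (Fin 3 → ℝ) :=
  ![![1, 0, 1], ![0, 1, 1], ![-1, 0, 1], ![0, -1, 1]]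

/-- The convex set of states of the squit (a square). -/
noncomputable def Q : Set (Fin 3 → ℝ) := convexHull ℝ {ws 0, ws 1, ws 2, ws 3}

/-- The dihedral symmetries `U_k^s` of the squit. -/
noncomputable def U (k : Fin 4) (s : ℝ) : Matrix (Fin 3) (Fin 3) ℝ :=
  Matrix.of
    ![![Real.cos (π * k / 2), -s * Real.sin (π * k / 2), 0],
      ![Real.sin (π * k / 2),  s * Real.cos (π * k / 2), 0],
      ![0, 0, 1]]

/-!
A linear map sends the convex hull of the vertices onto the convex hull of their images, and
each vertex `ωᵢ` is an extreme point of `Q` (it is the unique maximiser of `ωᵢ ⬝ᵥ ·` on the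
vertices). So if `T` preserves `Q`, every vertex is the image of a vertex and `T` permutes the
four vertices. The permutation must respect the linear relation `ω₀ + ω₂ = ω₁ + ω₃`, so it maps
opposite vertices to opposite vertices: it is a rotation `i ↦ k + i` or a reflection `i ↦ k - i`
of `Fin 4`, exactly the action of `U k 1` and `U k (-1)`. The vertices span `ℝ³`, so this
determines `T`.
-/

section Convex

variable {𝕜 E : Type*} [Field 𝕜] [LinearOrder 𝕜] [IsStrictOrderedRing 𝕜] [AddCommGroup E]
  [Module 𝕜 E]

theorem convex_setOf_lt_or_eq (l : E →ₗ[𝕜] 𝕜) (x : E) : Convex 𝕜 {y | l y < l x ∨ y = x} := by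
  rintro y hy z hz a b ha hb hab
  obtain rfl := eq_sub_of_add_eq' hab
  rcases ha.eq_or_lt with rfl | ha
  · rwa [sub_zero, zero_smul, one_smul, zero_add]
  rcases hb.eq_or_lt' with hb | hb
  · rwa [hb, zero_smul, add_zero, ← sub_eq_zero.1 hb, one_smul]
  have hl : l (a • y + (1 - a) • z) = a * l y + (1 - a) * l z := by simp
  rcases hy with hy | rfl <;> rcases hz with hz | rfl
  · left; rw [hl]; nlinarith [mul_pos ha (sub_pos.2 hy), mul_pos hb (sub_pos.2 hz)]
  · left; rw [hl]; nlinarith [mul_pos ha (sub_pos.2 hy)]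
  · left; rw [hl]; nlinarith [mul_pos hb (sub_pos.2 hz)]
  · exact Or.inr (Convex.combo_self hab _)

theorem mem_extremePoints_convexHull_of_lt {A : Set E} {x : E} (l : E →ₗ[𝕜] 𝕜) (hx : x ∈ A)
    (hA : ∀ y ∈ A, y ≠ x → l y < l x) : x ∈ (convexHull 𝕜 A).extremePoints 𝕜 := by
  have hAS : convexHull 𝕜 A ⊆ {y | l y < l x ∨ y = x} :=
    convexHull_min (fun y hy => (eq_or_ne y x).symm.imp_left (hA y hy)) (convex_setOf_lt_or_eq l x)
  refine mem_extremePoints.2 ⟨subset_convexHull 𝕜 A hx,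
    fun y hy z hz ⟨a, b, ha, hb, hab, hxyz⟩ => ?_⟩
  obtain rfl := eq_sub_of_add_eq' hab
  have hl : a * l y + (1 - a) * l z = l x := by rw [← hxyz]; simp
  rcases hAS hy with hy' | rfl <;> rcases hAS hz with hz' | rfl
  · nlinarith [mul_pos ha (sub_pos.2 hy'), mul_pos hb (sub_pos.2 hz')]
  · nlinarith [mul_pos ha (sub_pos.2 hy')]
  · nlinarith [mul_pos hb (sub_pos.2 hz')]
  · exact ⟨rfl, rfl⟩

theorem LinearMap.image_convexHull_eq_self_iff (f : E →ₗ[𝕜] E) {s : Set E} (hs : s.Finite)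
    (hext : s ⊆ (convexHull 𝕜 s).extremePoints 𝕜) :
    f '' convexHull 𝕜 s = convexHull 𝕜 s ↔ f '' s = s := by
  rw [f.image_convexHull]
  refine ⟨fun h => ?_, fun h => by rw [h]⟩
  have hsub : s ⊆ f '' s := hext.trans (h ▸ extremePoints_convexHull_subset)
  exact (Set.eq_of_subset_of_ncard_le hsub (Set.ncard_image_le hs) (hs.image f)).symm

end Convex

theorem Function.Injective.image_range_eq_range_iff {ι α : Type*} [Finite ι] {v : ι → α}
    (hv : Function.Injective v) (f : α → α) :
    f '' Set.range v = Set.range v ↔ ∃ σ : Equiv.Perm ι, ∀ i, f (v i) = v (σ i) := by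
  constructor
  · intro h
    have hmem (i : ι) : f (v i) ∈ Set.range v := h ▸ Set.mem_image_of_mem f (Set.mem_range_self i)
    choose σ hσ using hmem
    have hsurj : Function.Surjective σ := by
      intro j
      obtain ⟨_, ⟨i, rfl⟩, hi⟩ := h.symm ▸ Set.mem_range_self (f := v) j
      exact ⟨i, hv ((hσ i).trans hi)⟩
    exact ⟨Equiv.ofBijective σ (Finite.surjective_iff_bijective.1 hsurj), fun i => (hσ i).symm⟩
  · rintro ⟨σ, hσ⟩
    rw [← Set.range_comp, show f ∘ v = v ∘ σ from funext hσ, Set.range_comp, σ.range_eq_univ,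
      Set.image_univ]

theorem Q_eq_convexHull_range : Q = convexHull ℝ (Set.range ws) := by
  rw [Q]
  congr 1
  ext x
  simp [Fin.exists_fin_succ, eq_comm]

theorem ws_dotProduct_self (i : Fin 4) : ws i ⬝ᵥ ws i = 2 := by
  fin_cases i <;> simp [ws, dotProduct, Fin.sum_univ_three] <;> norm_num

theorem ws_dotProduct_le_one {i j : Fin 4} (hij : j ≠ i) : ws i ⬝ᵥ ws j ≤ 1 := by
  revert hij
  fin_cases i <;> fin_cases j <;> simp [ws, dotProduct, Fin.sum_univ_three]

theorem eq_add_two_of_ws_dotProduct_nonpos {i j : Fin 4} (h : ws i ⬝ᵥ ws j ≤ 0) : j = i + 2 := by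
  revert h
  fin_cases i <;> fin_cases j <;> simp [ws, dotProduct, Fin.sum_univ_three]

theorem ws_dotProduct_lt {i j : Fin 4} (hij : j ≠ i) : ws i ⬝ᵥ ws j < ws i ⬝ᵥ ws i := by
  linarith [ws_dotProduct_le_one hij, ws_dotProduct_self i]

theorem ws_injective : Function.Injective ws := fun i j h =>
  not_ne_iff.1 fun hji => (ws_dotProduct_lt hji).ne (by rw [h])

theorem range_ws_subset_extremePoints :
    Set.range ws ⊆ (convexHull ℝ (Set.range ws)).extremePoints ℝ := by
  rintro _ ⟨i, rfl⟩
  refine mem_extremePoints_convexHull_of_lt (dotProductBilin ℝ ℝ (ws i)) (Set.mem_range_self i) ?_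
  rintro _ ⟨j, rfl⟩ hne
  exact ws_dotProduct_lt (ne_of_apply_ne ws hne)

theorem image_mulVec_Q_eq_self_iff (A : Matrix (Fin 3) (Fin 3) ℝ) :
    A.mulVec '' Q = Q ↔ ∃ σ : Equiv.Perm (Fin 4), ∀ i, A *ᵥ ws i = ws (σ i) := by
  rw [Q_eq_convexHull_range, ← coe_mulVecLin,
    (mulVecLin A).image_convexHull_eq_self_iff (Set.finite_range ws) range_ws_subset_extremePoints]
  exact ws_injective.image_range_eq_range_iff _

theorem ws_zero_add_ws_two : ws 0 + ws 2 = ws 1 + ws 3 := by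
  ext m; fin_cases m <;> simp [ws]

theorem eq_add_two_of_ws_add_ws_eq {a b c d : Fin 4} (hba : b ≠ a) (hda : d ≠ a)
    (h : ws a + ws c = ws b + ws d) : c = a + 2 := by
  -- Paired with `ws a`, the left side is `2 + ws a ⬝ᵥ ws c` and the right side is at most `2`.
  apply eq_add_two_of_ws_dotProduct_nonpos
  have hdot : ws a ⬝ᵥ ws a + ws a ⬝ᵥ ws c = ws a ⬝ᵥ ws b + ws a ⬝ᵥ ws d := by
    rw [← dotProduct_add, h, dotProduct_add]
  linarith [ws_dotProduct_self a, ws_dotProduct_le_one hba, ws_dotProduct_le_one hda]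

theorem Equiv.Perm.exists_eq_add_or_eq_sub_of_ws_add_ws_eq (σ : Equiv.Perm (Fin 4))
    (h : ws (σ 0) + ws (σ 2) = ws (σ 1) + ws (σ 3)) :
    ∃ k, (∀ i, σ i = k + i) ∨ (∀ i, σ i = k - i) := by
  have h2 : σ 2 = σ 0 + 2 :=
    eq_add_two_of_ws_add_ws_eq (σ.injective.ne (by decide)) (σ.injective.ne (by decide)) h
  have h3 : σ 3 = σ 1 + 2 :=
    eq_add_two_of_ws_add_ws_eq (σ.injective.ne (by decide)) (σ.injective.ne (by decide)) h.symm
  have h1 : σ 1 = σ 0 + 1 ∨ σ 1 = σ 0 - 1 := by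
    have h10 : σ 1 ≠ σ 0 := σ.injective.ne (by decide)
    have h12 : σ 1 ≠ σ 0 + 2 := h2 ▸ σ.injective.ne (by decide)
    generalize σ 0 = a, σ 1 = b at h10 h12 ⊢
    revert a b
    decide
  refine ⟨σ 0, h1.imp (fun h1 i => ?_) (fun h1 i => ?_)⟩ <;> fin_cases i <;> grind

theorem Matrix.ext_of_mulVec_ws {M N : Matrix (Fin 3) (Fin 3) ℝ}
    (h : ∀ i, M *ᵥ ws i = N *ᵥ ws i) : M = N := by
  ext i j
  have h0 := congrFun (h 0) i
  have h1 := congrFun (h 1) i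
  have h2 := congrFun (h 2) i
  simp [ws, mulVec, dotProduct, Fin.sum_univ_three] at h0 h1 h2
  fin_cases j <;> simp <;> linarith

theorem cos_pi_mul_three_div_two : cos (π * 3 / 2) = 0 := by
  rw [show π * 3 / 2 = π / 2 + π by ring, cos_add_pi, cos_pi_div_two, neg_zero]

theorem sin_pi_mul_three_div_two : sin (π * 3 / 2) = -1 := by
  rw [show π * 3 / 2 = π / 2 + π by ring, sin_add_pi, sin_pi_div_two]

theorem U_one_mulVec_ws (k i : Fin 4) : U k 1 *ᵥ ws i = ws (k + i) := by
  ext m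
  fin_cases k <;> fin_cases i <;> fin_cases m <;>
    simp [U, ws, mulVec, dotProduct, Fin.sum_univ_three, cos_pi_mul_three_div_two,
      sin_pi_mul_three_div_two]

theorem U_neg_one_mulVec_ws (k i : Fin 4) : U k (-1) *ᵥ ws i = ws (k - i) := by
  ext m
  fin_cases k <;> fin_cases i <;> fin_cases m <;>
    simp [U, ws, mulVec, dotProduct, Fin.sum_univ_three, cos_pi_mul_three_div_two,
      sin_pi_mul_three_div_two]

theorem squit_reversible_channels_general (T : Matrix (Fin 3) (Fin 3) ℝ) :
    T.mulVec '' Q = Q ↔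
    ∃ (k : Fin 4) (s : ℝ), (s = 1 ∨ s = -1) ∧ T = U k s := by
  rw [image_mulVec_Q_eq_self_iff]
  constructor
  · rintro ⟨σ, hσ⟩
    have hrel : ws (σ 0) + ws (σ 2) = ws (σ 1) + ws (σ 3) := by
      rw [← hσ, ← hσ, ← hσ, ← hσ, ← mulVec_add, ← mulVec_add, ws_zero_add_ws_two]
    obtain ⟨k, hk | hk⟩ := σ.exists_eq_add_or_eq_sub_of_ws_add_ws_eq hrel
    · exact ⟨k, 1, .inl rfl, Matrix.ext_of_mulVec_ws fun i => by rw [hσ, hk, U_one_mulVec_ws]⟩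
    · exact ⟨k, -1, .inr rfl, Matrix.ext_of_mulVec_ws fun i => by rw [hσ, hk, U_neg_one_mulVec_ws]⟩
  · rintro ⟨k, s, rfl | rfl, rfl⟩
    · exact ⟨Equiv.addLeft k, U_one_mulVec_ws k⟩
    · exact ⟨Equiv.subLeft k, U_neg_one_mulVec_ws k⟩

/-- The reversible channels of the squit form the dihedral group of order eight. -/
theorem squit_reversible_channels (T : Matrix (Fin 3) (Fin 3) ℝ) (hT : IsUnit T) :
    T.mulVec '' Q = Q ↔
    ∃ (k : Fin 4) (s : ℝ), (s = 1 ∨ s = -1) ∧ T = U k s :=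
  squit_reversible_channels_general T
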